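/- arXiv:1004.3659 — 2 statements merged into one kernel-verified Lean document; each statement's English description precedes it below -/
import Mathlib

section
/- In the deleting-voters construction, if w can be made the unique fallback voting winner by deleting at most k voters, then w wins by overall score (not by strict majority), every candidate b ∈ B loses at least one approval among the deleted voters, and consequently the set {b_i : v_i deleted} ∪ (arbitrary completion to size k) witnesses that G has a dominating set of size at most k. -/
/- Fallback voting framework.  A ballot is the linearly ordered list of a voter's
approved candidates (most preferred first); an election is a list of ballots. -/
namespace FV

variable {α : Type*} [DecidableEq α]

/-- The level-`i` score of candidate `c`: the number of voters who approve `c`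
and rank `c` among their top `i` approved candidates. -/
def levelScore (V : List (List α)) (i : ℕ) (c : α) : ℕ :=
  (V.filter (fun b => decide (c ∈ b.take i))).length

/-- The overall approval score of candidate `c`. -/
def score (V : List (List α)) (c : α) : ℕ :=
  (V.filter (fun b => decide (c ∈ b))).length

/-- `c` has a strict majority of approvals at level `i`. -/
def MajAt (V : List (List α)) (i : ℕ) (c : α) : Prop :=
  2 * levelScore V i c > V.length

/-- `c` is a fallback voting winner of the election with candidate set `Cs`
and voter list `V`:  either at the first level (up to `‖Cs‖`) at which some
candidate attains a strict majority, `c` has a strict majority and maximal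
level score among strict-majority candidates; or no candidate ever attains a
strict majority and `c` has maximal overall approval score. -/
def FVWinner (Cs : Finset α) (V : List (List α)) (c : α) : Prop :=
  c ∈ Cs ∧
    ((∃ i, 1 ≤ i ∧ i ≤ Cs.card ∧ MajAt V i c ∧
        (∀ j, j < i → ∀ d ∈ Cs, ¬ MajAt V j d) ∧
        (∀ d ∈ Cs, MajAt V i d → levelScore V i d ≤ levelScore V i c)) ∨
     ((∀ i, i ≤ Cs.card → ∀ d ∈ Cs, ¬ MajAt V i d) ∧
        ∀ d ∈ Cs, score V d ≤ score V c))

/-- `c` is the unique fallback voting winner. -/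
def UniqueFVWinner (Cs : Finset α) (V : List (List α)) (c : α) : Prop :=
  FVWinner Cs V c ∧ ∀ d, FVWinner Cs V d → d = c

end FV

/- The deleting-voters construction.  Candidates are `Option (Fin n)`:
`some b` is the vertex candidate for `b` and `none` is the distinguished
candidate `w`.  For each `i`, voter `vᵢ` approves the candidates of
`N_c[bᵢ]` (enumerated by `M i`); for each `i` there is a voter approving
`B − N_c[bᵢ]` (enumerated by `L i`) followed by `w`; and there are `k`
voters approving nothing. -/
namespace DV

/-- The ballot of voter `vᵢ`, approving `N_c[bᵢ]`. -/
def vballot {n : ℕ} (M : Fin n → List (Fin n)) (i : Fin n) : List (Option (Fin n)) :=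
  (M i).map some

/-- The ballot approving `B − N_c[bᵢ]` and then `w`. -/
def wballot {n : ℕ} (L : Fin n → List (Fin n)) (i : Fin n) : List (Option (Fin n)) :=
  (L i).map some ++ [none]

/-- The full voter list of the construction. -/
def delElection {n : ℕ} (k : ℕ) (M L : Fin n → List (Fin n)) :
    List (List (Option (Fin n))) :=
  (List.finRange n).map (vballot M) ++ (List.finRange n).map (wballot L) ++
    List.replicate k ([] : List (Option (Fin n)))

/-- The voter list obtained by deleting exactly the voters `vᵢ` for `i ∈ B'`. -/
def delElectionMinus {n : ℕ} (k : ℕ) (M L : Fin n → List (Fin n))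
    (B' : Finset (Fin n)) : List (List (Option (Fin n))) :=
  ((List.finRange n).filter (fun i => decide (i ∉ B'))).map (vballot M) ++
    (List.finRange n).map (wballot L) ++
    List.replicate k ([] : List (Option (Fin n)))

end DV

/-! Every candidate starts with score `n`: the approvals of `b ∈ B` come from `N_c[b]` among the
voters `vᵢ` and from the complementary set of `w`-voters. After deleting at most `k` voters at
least `2n` remain, so no candidate ever reaches a strict majority and `w` must be the unique
candidate of maximal score. If none of the voters `vᵢ` with `b ∈ N_c[bᵢ]` were deleted, `b` would
keep `|N_c[b]|` approvals, at least as many as the surviving `w`-voters that do not approve `b`,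
so `b` would tie with `w`. Hence the indices of the deleted voters `vᵢ` dominate `G`. -/

namespace List

variable {α : Type*} {p : α → Bool} {l₁ l₂ l : List α}

theorem length_eq_countP_add_countP_not (p : α → Bool) (l : List α) :
    l.length = l.countP p + l.countP (fun x => !p x) := by
  simpa using length_eq_countP_add_countP p (l := l)

theorem Sublist.countP_add_countP_not_le (h₁ : l₁ <+ l) (h₂ : l₂ <+ l) :
    l₁.countP p + l₂.countP (fun x => !p x) ≤ l.length := by
  rw [length_eq_countP_add_countP_not p l]
  exact Nat.add_le_add h₁.countP_le h₂.countP_le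

theorem Sublist.length_le_countP_add_countP_not (h₂ : l₂ <+ l) (hl : l.Nodup)
    (hp : ∀ x ∈ l, p x → x ∈ l₁) :
    l₂.length ≤ l₁.countP p + l₂.countP (fun x => !p x) := by
  have hfilter : (l.filter p).Subperm l₁ :=
    (hl.filter p).subperm fun x hx => by
      rw [mem_filter] at hx
      exact hp x hx.1 hx.2
  have h := hfilter.countP_le p
  simp only [countP_filter, Bool.and_self] at h
  rw [length_eq_countP_add_countP_not p l₂]
  exact Nat.add_le_add_right (h₂.countP_le.trans h) _

end List

namespace FV

variable {α : Type*} [DecidableEq α] {Cs : Finset α} {V : List (List α)} {c : α}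

theorem score_eq_countP (V : List (List α)) (c : α) :
    score V c = V.countP (fun b => decide (c ∈ b)) :=
  List.countP_eq_length_filter.symm

theorem levelScore_le_score (V : List (List α)) (i : ℕ) (c : α) :
    levelScore V i c ≤ score V c :=
  (List.monotone_filter_right V fun _ h => by
    simpa using List.take_subset i _ (by simpa using h)).length_le

theorem not_majAt_of_two_mul_score_le (h : 2 * score V c ≤ V.length) (i : ℕ) :
    ¬ MajAt V i c := by
  have := levelScore_le_score V i c
  unfold MajAt
  omega

theorem fvWinner_iff_of_forall_not_majAt (h : ∀ i, ∀ d ∈ Cs, ¬ MajAt V i d) :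
    FVWinner Cs V c ↔ c ∈ Cs ∧ ∀ d ∈ Cs, score V d ≤ score V c := by
  refine and_congr_right fun hc => ⟨?_, fun hmax => .inr ⟨fun i _ => h i, hmax⟩⟩
  rintro (⟨i, -, -, hmaj, -⟩ | ⟨-, hmax⟩)
  · exact absurd hmaj (h i c hc)
  · exact hmax

theorem UniqueFVWinner.score_lt (hwin : UniqueFVWinner Cs V c)
    (h : ∀ i, ∀ d ∈ Cs, ¬ MajAt V i d) {d : α} (hd : d ∈ Cs) (hdc : d ≠ c) :
    score V d < score V c := by
  obtain ⟨hc, hmax⟩ := (fvWinner_iff_of_forall_not_majAt h).1 hwin.1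
  refine (hmax d hd).lt_of_ne fun heq => hdc (hwin.2 d ?_)
  exact (fvWinner_iff_of_forall_not_majAt h).2 ⟨hd, fun e he => heq ▸ hmax e he⟩

end FV

namespace DV

open List

variable {n k : ℕ} {M L : Fin n → List (Fin n)}

def subElection (M L : Fin n → List (Fin n)) (S T : List (Fin n)) (m : ℕ) :
    List (List (Option (Fin n))) :=
  S.map (vballot M) ++ T.map (wballot L) ++ replicate m []

theorem length_delElection : (delElection k M L).length = 2 * n + k := by
  simp [delElection]
  omega

theorem length_subElection (S T : List (Fin n)) (m : ℕ) :
    (subElection M L S T m).length = S.length + T.length + m := by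
  simp [subElection, Nat.add_assoc]

theorem exists_eq_subElection_of_sublist {V : List (List (Option (Fin n)))}
    (h : V <+ delElection k M L) :
    ∃ S T : List (Fin n), ∃ m ≤ k,
      S <+ finRange n ∧ T <+ finRange n ∧ V = subElection M L S T m := by
  obtain ⟨V₁₂, V₃, rfl, h₁₂, h₃⟩ := sublist_append_iff.1 h
  obtain ⟨V₁, V₂, rfl, h₁, h₂⟩ := sublist_append_iff.1 h₁₂
  obtain ⟨S, hS, rfl⟩ := sublist_map_iff.1 h₁
  obtain ⟨T, hT, rfl⟩ := sublist_map_iff.1 h₂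
  obtain ⟨m, hm, rfl⟩ := sublist_replicate_iff.1 h₃
  exact ⟨S, T, m, hm, hS, hT, rfl⟩

variable {S T : List (Fin n)} {m : ℕ}

theorem score_subElection_none : FV.score (subElection M L S T m) none = T.length := by
  simp [FV.score_eq_countP, subElection, vballot, wballot, Function.comp_def]

theorem score_subElection_some (hML : ∀ i b, b ∈ L i ↔ b ∉ M i) (b : Fin n) :
    FV.score (subElection M L S T m) (some b) =
      S.countP (fun i => b ∈ M i) + T.countP (fun i => !decide (b ∈ M i)) := by
  simp [FV.score_eq_countP, subElection, vballot, wballot, Function.comp_def, hML]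

theorem score_subElection_le (hML : ∀ i b, b ∈ L i ↔ b ∉ M i)
    (hS : S <+ finRange n) (hT : T <+ finRange n) (c : Option (Fin n)) :
    FV.score (subElection M L S T m) c ≤ n := by
  cases c with
  | none => simpa [score_subElection_none] using hT.length_le
  | some b => simpa [score_subElection_some hML] using hS.countP_add_countP_not_le hT

theorem score_subElection_none_le_some (hML : ∀ i b, b ∈ L i ↔ b ∉ M i)
    (hT : T <+ finRange n) {b : Fin n} (hb : ∀ i, b ∈ M i → i ∈ S) :
    FV.score (subElection M L S T m) none ≤ FV.score (subElection M L S T m) (some b) := by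
  rw [score_subElection_none, score_subElection_some hML]
  exact hT.length_le_countP_add_countP_not (nodup_finRange n) fun i _ hi =>
    hb i (by simpa using hi)

end DV

theorem fv_deleting_voters_winner_gives_dominating_set_general {n k : ℕ}
    (G : SimpleGraph (Fin n))
    (M L : Fin n → List (Fin n))
    (hMmem : ∀ i b, b ∈ M i ↔ (b = i ∨ G.Adj i b))
    (hLmem : ∀ i b, b ∈ L i ↔ ¬ (b = i ∨ G.Adj i b))
    (V' : List (List (Option (Fin n))))
    (hsub : V'.Sublist (DV.delElection k M L))
    (hdel : (DV.delElection k M L).length ≤ V'.length + k)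
    (hwin : FV.UniqueFVWinner Finset.univ V' (none : Option (Fin n))) :
    (∀ i, ¬ FV.MajAt V' i (none : Option (Fin n))) ∧
    (∀ b : Fin n, FV.score V' (some b) < FV.score V' (none : Option (Fin n))) ∧
    (∃ B'' : Finset (Fin n), B''.card ≤ k ∧ ∀ u, ∃ v ∈ B'', u = v ∨ G.Adj v u) := by
  obtain ⟨S, T, m, hm, hS, hT, rfl⟩ := DV.exists_eq_subElection_of_sublist hsub
  have hML : ∀ i b, b ∈ L i ↔ b ∉ M i := fun i b => by rw [hLmem, hMmem]
  have hlen : 2 * n ≤ S.length + T.length + m := by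
    rw [DV.length_delElection, DV.length_subElection] at hdel
    omega
  have hnomaj : ∀ i c, ¬ FV.MajAt (DV.subElection M L S T m) i c := fun i c =>
    FV.not_majAt_of_two_mul_score_le (by
      rw [DV.length_subElection]
      linarith [DV.score_subElection_le hML hS hT (m := m) c]) i
  have hlt : ∀ b : Fin n, FV.score _ (some b) < FV.score _ none := fun b =>
    hwin.score_lt (fun i d _ => hnomaj i d) (Finset.mem_univ _) (Option.some_ne_none b)
  refine ⟨fun i => hnomaj i none, hlt, Finset.univ \ S.toFinset, ?_, fun u => ?_⟩
  · rw [Finset.card_univ_sdiff, List.toFinset_card_of_nodup (hS.nodup (List.nodup_finRange n)),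
      Fintype.card_fin]
    have := hT.length_le
    simp only [List.length_finRange] at this
    omega
  · obtain ⟨i, hui, hiS⟩ : ∃ i, u ∈ M i ∧ i ∉ S := by
      by_contra! h
      exact (hlt u).not_ge (DV.score_subElection_none_le_some hML hT h)
    exact ⟨i, by simpa using hiS, (hMmem i u).1 hui⟩

/-- if deleting at most `k` voters makes `w` the unique
fallback winner, then `w` wins by overall score (it never attains a strict
majority at any level), every vertex candidate has strictly smaller overall
score than `w` (so loses at least one approval among the deleted voters),
and `G` has a dominating set of size at most `k`. -/
theorem fv_deleting_voters_winner_gives_dominating_set {n k : ℕ} (hk : 0 < k)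
    (G : SimpleGraph (Fin n)) [DecidableRel G.Adj]
    (M L : Fin n → List (Fin n))
    (hMnd : ∀ i, (M i).Nodup) (hLnd : ∀ i, (L i).Nodup)
    (hMmem : ∀ i b, b ∈ M i ↔ (b = i ∨ G.Adj i b))
    (hLmem : ∀ i b, b ∈ L i ↔ ¬ (b = i ∨ G.Adj i b))
    (V' : List (List (Option (Fin n))))
    (hsub : V'.Sublist (DV.delElection k M L))
    (hdel : (DV.delElection k M L).length ≤ V'.length + k)
    (hwin : FV.UniqueFVWinner Finset.univ V' (none : Option (Fin n))) :
    (∀ i, ¬ FV.MajAt V' i (none : Option (Fin n))) ∧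
    (∀ b : Fin n, FV.score V' (some b) < FV.score V' (none : Option (Fin n))) ∧
    (∃ B'' : Finset (Fin n), B''.card ≤ k ∧ ∀ u, ∃ v ∈ B'', u = v ∨ G.Adj v u) :=
  fv_deleting_voters_winner_gives_dominating_set_general G M L hMmem hLmem V' hsub hdel hwin
end

section
/- Let G = (B,E) be a graph on n vertices and k ≤ n. In the adding-candidates destructive-control construction (qualified candidates {c,w} ∪ X ∪ Y ∪ Z with ‖X‖ = n−1, ‖Y‖ = n−2, ‖Z‖ = n−2; spoiler candidates B; voters: for each i one voter approving N_c[b_i] then X then c; n voters approving Y then c then w; one voter approving Z then w then c), G has a dominating set of size at most k if and only if c can be prevented from being the unique fallback voting winner by adding at most k spoiler candidates from B. -/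
/- The adding-candidates construction for destructive control.  Qualified
candidates: `{c,w} ∪ X ∪ Y ∪ Z` with `‖X‖ = n-1`, `‖Y‖ = n-2`, `‖Z‖ = n-2`;
spoiler candidates are the vertices of `G`.  Voters: for each `i` one voter
approving `N_c[bᵢ]` (restricted to the added spoilers) then `X` then `c`;
`n` voters approving `Y` then `c` then `w`; one voter approving `Z` then `w`
then `c`. -/
namespace ACD

abbrev Cand (n : ℕ) :=
  Sum (Fin n) (Sum (Fin (n - 1)) (Sum (Fin (n - 2)) (Sum (Fin (n - 2)) Bool)))

def bC {n : ℕ} (b : Fin n) : Cand n := Sum.inl b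
def xC {n : ℕ} (j : Fin (n - 1)) : Cand n := Sum.inr (Sum.inl j)
def yC {n : ℕ} (j : Fin (n - 2)) : Cand n := Sum.inr (Sum.inr (Sum.inl j))
def zC {n : ℕ} (j : Fin (n - 2)) : Cand n := Sum.inr (Sum.inr (Sum.inr (Sum.inl j)))
def cC (n : ℕ) : Cand n := Sum.inr (Sum.inr (Sum.inr (Sum.inr false)))
def wC (n : ℕ) : Cand n := Sum.inr (Sum.inr (Sum.inr (Sum.inr true)))

def Xlist (n : ℕ) : List (Cand n) := (List.finRange (n - 1)).map xC
def Ylist (n : ℕ) : List (Cand n) := (List.finRange (n - 2)).map yC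
def Zlist (n : ℕ) : List (Cand n) := (List.finRange (n - 2)).map zC

/-- The first-group ballot of voter `i` with spoiler set `B'` added. -/
def ballot1 {n : ℕ} (A : Fin n → List (Fin n)) (B' : Finset (Fin n)) (i : Fin n) :
    List (Cand n) :=
  (((A i).filter (fun b => decide (b ∈ B'))).map bC) ++ Xlist n ++ [cC n]

/-- The `2n+1` voters of the election with spoiler set `B'` added. -/
def election {n : ℕ} (A : Fin n → List (Fin n)) (B' : Finset (Fin n)) :
    List (List (Cand n)) :=
  (List.finRange n).map (ballot1 A B') ++
    List.replicate n (Ylist n ++ [cC n, wC n]) ++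
    [Zlist n ++ [wC n, cC n]]

/-- The candidate set when exactly the spoilers in `B'` have been added. -/
def candSet {n : ℕ} (B' : Finset (Fin n)) : Finset (Cand n) :=
  Finset.univ \ ((Finset.univ \ B').image bC)

end ACD

/-!
Below level `n` every candidate is approved by at most `n` of the `2n+1` voters, while at level `n`
both `c` and `w` have strict majorities: `w` with `n+1` approvals and `c` with `n+1` plus the number
of first-group voters none of whose added spoilers precede `c`, i.e. the voters `i` with
`N_c[bᵢ] ∩ B' = ∅`. So `c` is the unique winner exactly when `B'` is not a dominating set.
-/

namespace FV

variable {α : Type*} [DecidableEq α] {Cs : Finset α} {V : List (List α)} {i : ℕ} {c : α}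

theorem levelScore_append (W : List (List α)) (c : α) :
    levelScore (V ++ W) i c = levelScore V i c + levelScore W i c := by
  simp [levelScore]

theorem levelScore_replicate (m : ℕ) (b : List α) (c : α) :
    levelScore (List.replicate m b) i c = if c ∈ b.take i then m else 0 := by
  simp only [levelScore, List.filter_replicate]
  split_ifs <;> simp_all

theorem levelScore_singleton (b : List α) (c : α) :
    levelScore [b] i c = if c ∈ b.take i then 1 else 0 := by
  simpa using levelScore_replicate 1 b c

theorem levelScore_map {ι : Type*} (l : List ι) (f : ι → List α) (c : α) :
    levelScore (l.map f) i c = l.countP (fun x => c ∈ (f x).take i) := by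
  simp [levelScore, List.countP_eq_length_filter, List.filter_map, Function.comp_def]

theorem levelScore_le_length (c : α) : levelScore V i c ≤ V.length :=
  List.length_filter_le _ _

theorem levelScore_eq_zero {c : α} (hc : ∀ b ∈ V, c ∉ b) : levelScore V i c = 0 := by
  simp only [levelScore, List.length_eq_zero_iff, List.filter_eq_nil_iff, decide_eq_true_eq]
  exact fun b hb hcb => hc b hb (List.mem_of_mem_take hcb)

theorem fvWinner_iff_of_first_majority (hi : 1 ≤ i) (hiCs : i ≤ Cs.card) (hc : c ∈ Cs)
    (hmaj : MajAt V i c) (hbelow : ∀ j < i, ∀ d ∈ Cs, ¬ MajAt V j d) (d : α) :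
    FVWinner Cs V d ↔ d ∈ Cs ∧ MajAt V i d ∧
      ∀ e ∈ Cs, MajAt V i e → levelScore V i e ≤ levelScore V i d := by
  constructor
  · rintro ⟨hd, ⟨i', -, -, hmaj', hbelow', hmax⟩ | ⟨hnone, -⟩⟩
    · obtain rfl : i' = i := by
        rcases lt_trichotomy i' i with h | h | h
        · exact absurd hmaj' (hbelow i' h d hd)
        · exact h
        · exact absurd hmaj (hbelow' i h c hc)
      exact ⟨hd, hmaj', hmax⟩
    · exact absurd hmaj (hnone i hiCs c hc)
  · rintro ⟨hd, hmaj', hmax⟩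
    exact ⟨hd, Or.inl ⟨i, hi, hiCs, hmaj', hbelow, hmax⟩⟩

theorem uniqueFVWinner_iff_of_first_majority (hi : 1 ≤ i) (hiCs : i ≤ Cs.card) (hc : c ∈ Cs)
    (hmaj : MajAt V i c) (hbelow : ∀ j < i, ∀ d ∈ Cs, ¬ MajAt V j d) :
    UniqueFVWinner Cs V c ↔
      ∀ d ∈ Cs, d ≠ c → MajAt V i d → levelScore V i d < levelScore V i c := by
  simp only [UniqueFVWinner, fvWinner_iff_of_first_majority hi hiCs hc hmaj hbelow]
  constructor
  · rintro ⟨⟨-, -, hmax⟩, huniq⟩ d hd hdc hmajd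
    by_contra! hle
    exact hdc (huniq d ⟨hd, hmajd, fun e he hmaje => (hmax e he hmaje).trans hle⟩)
  · intro hlt
    refine ⟨⟨hc, hmaj, fun e he hmaje => ?_⟩, fun d ⟨hd, hmajd, hmax⟩ => ?_⟩
    · by_cases hec : e = c
      · rw [hec]
      · exact (hlt e he hec hmaje).le
    · by_contra hdc
      exact absurd (hmax c hc hmaj) (not_le.2 (hlt d hd hdc hmajd))

end FV

theorem List.mem_take_append_cons_iff {α : Type*} {a : α} {l r : List α} (ha : a ∉ l)
    (j : ℕ) :
    a ∈ (l ++ a :: r).take j ↔ l.length < j := by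
  constructor
  · intro h
    by_contra! hj
    rw [List.take_append, Nat.sub_eq_zero_of_le hj, List.take_zero, List.append_nil] at h
    exact ha (List.mem_of_mem_take h)
  · intro hj
    obtain ⟨m, hm⟩ : ∃ m, j - l.length = m + 1 := ⟨j - l.length - 1, by omega⟩
    simp [List.take_append, hm]

namespace ACD
open FV

variable {n : ℕ} (A : Fin n → List (Fin n)) (B' : Finset (Fin n))

theorem length_election : (election A B').length = 2 * n + 1 := by
  simp [election]
  omega

theorem levelScore_election (j : ℕ) (d : Cand n) :
    levelScore (election A B') j d =
      levelScore ((List.finRange n).map (ballot1 A B')) j d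
      + levelScore (List.replicate n (Ylist n ++ [cC n, wC n])) j d
      + levelScore [Zlist n ++ [wC n, cC n]] j d := by
  simp only [election, levelScore_append]

theorem cC_mem_take_ballot1_iff (j : ℕ) (i : Fin n) :
    cC n ∈ (ballot1 A B' i).take j ↔ ((A i).filter (· ∈ B')).length + (n - 1) < j := by
  rw [ballot1, List.mem_take_append_cons_iff (by simp [Xlist, bC, xC, cC])]
  simp [Xlist]

theorem wC_not_mem_ballot1 (i : Fin n) : wC n ∉ ballot1 A B' i := by
  simp [ballot1, Xlist, bC, xC, cC, wC]

theorem cC_mem_take_Y_iff (j : ℕ) : cC n ∈ (Ylist n ++ [cC n, wC n]).take j ↔ n - 2 < j := by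
  rw [List.mem_take_append_cons_iff (by simp [Ylist, yC, cC])]
  simp [Ylist]

theorem wC_mem_take_Y_iff (j : ℕ) :
    wC n ∈ (Ylist n ++ [cC n, wC n]).take j ↔ n - 2 + 1 < j := by
  rw [show Ylist n ++ [cC n, wC n] = (Ylist n ++ [cC n]) ++ [wC n] by simp,
    List.mem_take_append_cons_iff (by simp [Ylist, yC, cC, wC])]
  simp [Ylist]

theorem wC_mem_take_Z_iff (j : ℕ) : wC n ∈ (Zlist n ++ [wC n, cC n]).take j ↔ n - 2 < j := by
  rw [List.mem_take_append_cons_iff (by simp [Zlist, zC, wC])]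
  simp [Zlist]

theorem cC_mem_take_Z_iff (j : ℕ) :
    cC n ∈ (Zlist n ++ [wC n, cC n]).take j ↔ n - 2 + 1 < j := by
  rw [show Zlist n ++ [wC n, cC n] = (Zlist n ++ [wC n]) ++ [cC n] by simp,
    List.mem_take_append_cons_iff (by simp [Zlist, zC, cC, wC])]
  simp [Zlist]

theorem levelScore_cC (j : ℕ) :
    levelScore (election A B') j (cC n) =
      (List.finRange n).countP (fun i => ((A i).filter (· ∈ B')).length + (n - 1) < j)
      + (if n - 2 < j then n else 0) + (if n - 2 + 1 < j then 1 else 0) := by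
  simp only [levelScore_election, levelScore_map, levelScore_replicate, levelScore_singleton,
    cC_mem_take_ballot1_iff, cC_mem_take_Y_iff, cC_mem_take_Z_iff]

theorem levelScore_wC (j : ℕ) :
    levelScore (election A B') j (wC n) =
      (if n - 2 + 1 < j then n else 0) + (if n - 2 < j then 1 else 0) := by
  have hfirst : levelScore ((List.finRange n).map (ballot1 A B')) j (wC n) = 0 :=
    levelScore_eq_zero (by simpa using wC_not_mem_ballot1 A B')
  simp only [levelScore_election, hfirst, zero_add, levelScore_replicate, levelScore_singleton,
    wC_mem_take_Y_iff, wC_mem_take_Z_iff]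

theorem levelScore_le_of_ne {d : Cand n} (hc : d ≠ cC n) (hw : d ≠ wC n) (j : ℕ) :
    levelScore (election A B') j d ≤ n := by
  have h1 := levelScore_le_length (V := (List.finRange n).map (ballot1 A B')) (i := j) d
  have h2 := levelScore_le_length (V := List.replicate n (Ylist n ++ [cC n, wC n])) (i := j) d
  have h3 := levelScore_le_length (V := [Zlist n ++ [wC n, cC n]]) (i := j) d
  simp only [List.length_map, List.length_finRange, List.length_replicate,
    List.length_singleton] at h1 h2 h3
  rw [levelScore_election]
  -- every other candidate is approved within a single voter group; the groups have n, n, 1 voters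
  obtain b | x | y | z | (_ | _) := d
  all_goals simp [levelScore_eq_zero, ballot1, Xlist, Ylist, Zlist, bC, xC, yC, zC, cC, wC]
    at hc hw h1 h2 h3 ⊢
  · exact h1
  · exact h1
  · exact h2
  · exact h3.trans (by have := z.isLt; omega)

theorem levelScore_cC_self (hn : 2 ≤ n) :
    levelScore (election A B') n (cC n) =
      (List.finRange n).countP (fun i => ∀ b ∈ A i, b ∉ B') + n + 1 := by
  rw [levelScore_cC, if_pos (by omega), if_pos (by omega)]
  congr 2
  refine List.countP_congr fun i _ => ?_
  have hlen : ((A i).filter (· ∈ B')).length + (n - 1) < n ↔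
      ((A i).filter (· ∈ B')).length = 0 := by omega
  simp [hlen, List.filter_eq_nil_iff]

theorem levelScore_wC_self (hn : 2 ≤ n) : levelScore (election A B') n (wC n) = n + 1 := by
  rw [levelScore_wC, if_pos (by omega), if_pos (by omega)]

theorem not_majAt_election_of_lt {j : ℕ} (hj : j < n) (d : Cand n) :
    ¬ MajAt (election A B') j d := by
  have hle : levelScore (election A B') j d ≤ n := by
    by_cases hc : d = cC n
    · subst hc
      rw [levelScore_cC, List.countP_eq_zero.2 fun i _ => by simp only [decide_eq_true_eq]; omega]
      split_ifs <;> omega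
    by_cases hw : d = wC n
    · subst hw
      rw [levelScore_wC]
      split_ifs <;> omega
    exact levelScore_le_of_ne A B' hc hw j
  rw [MajAt, length_election]
  omega

theorem eq_cC_or_eq_wC_of_majAt {j : ℕ} {d : Cand n} (h : MajAt (election A B') j d) :
    d = cC n ∨ d = wC n := by
  by_contra! hd
  have := levelScore_le_of_ne A B' hd.1 hd.2 j
  rw [MajAt, length_election] at h
  omega

theorem cC_mem_candSet : cC n ∈ candSet B' := by simp [candSet, bC, cC]

theorem wC_mem_candSet : wC n ∈ candSet B' := by simp [candSet, bC, wC]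

theorem le_card_candSet (hn : 2 ≤ n) : n ≤ (candSet B').card := by
  have himage : ((Finset.univ \ B').image bC).card ≤ n :=
    Finset.card_image_le.trans ((Finset.card_le_univ _).trans (by simp))
  have hcard : Fintype.card (Cand n) = n + ((n - 1) + ((n - 2) + ((n - 2) + 2))) := by simp [Cand]
  rw [candSet, Finset.card_sdiff_of_subset (Finset.subset_univ _), Finset.card_univ, hcard]
  omega

theorem uniqueFVWinner_election_iff (hn : 2 ≤ n) :
    UniqueFVWinner (candSet B') (election A B') (cC n) ↔ ∃ i, ∀ b ∈ A i, b ∉ B' := by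
  have hc := levelScore_cC_self A B' hn
  have hw := levelScore_wC_self A B' hn
  have hmaj : ∀ d, d = cC n ∨ d = wC n → MajAt (election A B') n d := by
    rintro d (rfl | rfl) <;> rw [MajAt, length_election] <;> omega
  rw [uniqueFVWinner_iff_of_first_majority (by omega) (le_card_candSet B' hn) (cC_mem_candSet B')
    (hmaj _ (.inl rfl)) fun j hj d _ => not_majAt_election_of_lt A B' hj d]
  constructor
  · intro h
    have hlt := h (wC n) (wC_mem_candSet B') (by simp [wC, cC]) (hmaj _ (.inr rfl))
    have hpos : 0 < (List.finRange n).countP (fun i => ∀ b ∈ A i, b ∉ B') := by omega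
    obtain ⟨i, -, hi⟩ := List.countP_pos_iff.1 hpos
    exact ⟨i, of_decide_eq_true hi⟩
  · rintro ⟨i, hi⟩ d - hdc hmajd
    obtain rfl := (eq_cC_or_eq_wC_of_majAt A B' hmajd).resolve_left hdc
    have : 0 < (List.finRange n).countP (fun i => ∀ b ∈ A i, b ∉ B') :=
      List.countP_pos_iff.2 ⟨i, List.mem_finRange i, decide_eq_true hi⟩
    omega

end ACD

theorem dominating_iff_forall_exists_mem {n : ℕ} {G : SimpleGraph (Fin n)}
    {A : Fin n → List (Fin n)} (hA : ∀ i b, b ∈ A i ↔ (b = i ∨ G.Adj i b))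
    (B' : Finset (Fin n)) :
    (∀ u, ∃ v ∈ B', u = v ∨ G.Adj v u) ↔ ∀ i, ∃ b ∈ A i, b ∈ B' := by
  simp only [hA]
  refine forall_congr' fun u => ⟨?_, ?_⟩
  · rintro ⟨v, hv, huv⟩
    exact ⟨v, huv.imp (·.symm) (·.symm), hv⟩
  · rintro ⟨v, hvu, hv⟩
    exact ⟨v, hv, hvu.imp (·.symm) (·.symm)⟩

theorem fv_destructive_adding_candidates_general {n k : ℕ} (hn : 3 ≤ n)
    (G : SimpleGraph (Fin n))
    (A : Fin n → List (Fin n))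
    (hAmem : ∀ i b, b ∈ A i ↔ (b = i ∨ G.Adj i b)) :
    (∃ B' : Finset (Fin n), B'.card ≤ k ∧ ∀ u, ∃ v ∈ B', u = v ∨ G.Adj v u) ↔
    (∃ B' : Finset (Fin n), B'.card ≤ k ∧
      ¬ FV.UniqueFVWinner (ACD.candSet B') (ACD.election A B') (ACD.cC n)) := by
  refine exists_congr fun B' => and_congr_right fun _ => ?_
  rw [ACD.uniqueFVWinner_election_iff A B' (by omega), dominating_iff_forall_exists_mem hAmem]
  push Not
  rfl

/-- in the adding-candidates destructive construction, `G` has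
a dominating set of size at most `k` iff `c` can be prevented from being the
unique fallback voting winner by adding at most `k` spoiler candidates. -/
theorem fv_destructive_adding_candidates {n k : ℕ} (hn : 3 ≤ n)
    (hk : 0 < k) (hkn : k ≤ n)
    (G : SimpleGraph (Fin n)) [DecidableRel G.Adj]
    (A : Fin n → List (Fin n))
    (hAnd : ∀ i, (A i).Nodup)
    (hAmem : ∀ i b, b ∈ A i ↔ (b = i ∨ G.Adj i b)) :
    (∃ B' : Finset (Fin n), B'.card ≤ k ∧ ∀ u, ∃ v ∈ B', u = v ∨ G.Adj v u) ↔
    (∃ B' : Finset (Fin n), B'.card ≤ k ∧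
      ¬ FV.UniqueFVWinner (ACD.candSet B') (ACD.election A B') (ACD.cC n)) :=
  fv_destructive_adding_candidates_general hn G A hAmem
end
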